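/- arXiv:2404.05463 — 3 statements merged into one kernel-verified Lean document; each statement's English description precedes it below -/
import Mathlib

section
/- Define for A ∈ End(V) with A ω-skew-symmetric and commuting with all Ja (A in so*(2n)), the curvature operator R_A(x,y)z := κ ω(x,y) Az + (κ/2)(ω(x,z)Ay - Σ_a g_a(x,z)J_aAy + ω(Ay,z)x - Σ_a g_a(Ay,z)J_ax) - (κ/2)(ω(y,z)Ax - Σ_a g_a(y,z)J_aAx + ω(Ax,z)y - Σ_a g_a(Ax,z)J_ay) - (κ/2)Σ_a (g_a(x,Ay) - g_a(y,Ax))J_az. Then R_A satisfies the first Bianchi identity: R_A(x,y)z + R_A(y,z)x + R_A(z,x)y = 0 for all x,y,z. -/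
/-!
Up to the factor κ/2, `R_A(x,y)z` is a part built from `ω` and `A` alone minus, for each `a`, a
part built from `ω`, `A` and `J_a` alone. The cyclic sum of each part vanishes separately: after
moving `A` across `ω`, it is a formal consequence of the symmetry of `ω(u, J_a v)` and of
`ω(u, A v)` and the antisymmetry of `ω(u, v)` and of `ω(u, J_a A v)`.
-/

/-- The curvature operator R_A(x,y)z of Corollary `curvatureRQom`:
R_A(x,y)z = κ ω(x,y) Az
  + (κ/2)(ω(x,z)Ay - Σₐ gₐ(x,z)JₐAy + ω(Ay,z)x - Σₐ gₐ(Ay,z)Jₐx)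
  - (κ/2)(ω(y,z)Ax - Σₐ gₐ(y,z)JₐAx + ω(Ax,z)y - Σₐ gₐ(Ax,z)Jₐy)
  - (κ/2) Σₐ (gₐ(x,Ay) - gₐ(y,Ax)) Jₐz,
where gₐ(u,w) = ω(u, Jₐ w). -/
noncomputable def curvR {V : Type*} [AddCommGroup V] [Module ℝ V]
    (ω : LinearMap.BilinForm ℝ V) (J : Fin 3 → Module.End ℝ V)
    (A : Module.End ℝ V) (κ : ℝ) (x y z : V) : V :=
  κ • (ω x y • A z)
  + (κ / 2) • (ω x z • A y - ∑ a : Fin 3, ω x (J a z) • J a (A y)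
      + ω (A y) z • x - ∑ a : Fin 3, ω (A y) (J a z) • J a x)
  - (κ / 2) • (ω y z • A x - ∑ a : Fin 3, ω y (J a z) • J a (A x)
      + ω (A x) z • y - ∑ a : Fin 3, ω (A x) (J a z) • J a y)
  - (κ / 2) • (∑ a : Fin 3, (ω x (J a (A y)) - ω y (J a (A x))) • J a z)


section

variable {R V : Type*} [CommRing R] [AddCommGroup V] [Module R V]
  {ω : LinearMap.BilinForm R V} {J A : Module.End R V}

theorem bilin_apply_symm_of_sq_eq_neg_one (hskew : ∀ x y, ω x y = - ω y x)
    (hJsq : J * J = -1) (hherm : ∀ x y, ω (J x) (J y) = ω x y) (u v : V) :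
    ω u (J v) = ω v (J u) := by
  have hJJ : J (J u) = -u := by simpa using LinearMap.congr_fun hJsq u
  rw [hskew u, ← hherm v, hJJ, map_neg]

theorem bilin_apply_symm_of_skewAdjoint (hskew : ∀ x y, ω x y = - ω y x)
    (hAskew : ∀ x y, ω (A x) y = - ω x (A y)) (u v : V) :
    ω u (A v) = ω v (A u) := by
  rw [hskew u, hAskew, neg_neg]

theorem bilin_apply_comp_antisymm (hskew : ∀ x y, ω x y = - ω y x)
    (hJsq : J * J = -1) (hherm : ∀ x y, ω (J x) (J y) = ω x y)
    (hAskew : ∀ x y, ω (A x) y = - ω x (A y)) (hAJ : A * J = J * A) (u v : V) :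
    ω u (J (A v)) = - ω v (J (A u)) := by
  rw [bilin_apply_symm_of_sq_eq_neg_one hskew hJsq hherm, hAskew, ← Module.End.mul_apply, hAJ,
    Module.End.mul_apply]

variable (ω A) in
def curvROmega (x y z : V) : V :=
  (2 * ω x y) • A z + ω x z • A y + ω (A y) z • x - ω y z • A x - ω (A x) z • y

variable (ω J A) in
def curvRJ (x y z : V) : V :=
  ω x (J z) • J (A y) + ω (A y) (J z) • J x - ω y (J z) • J (A x) - ω (A x) (J z) • J y
    + (ω x (J (A y)) - ω y (J (A x))) • J z

theorem curvROmega_bianchi (hskew : ∀ x y, ω x y = - ω y x)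
    (hAskew : ∀ x y, ω (A x) y = - ω x (A y)) (x y z : V) :
    curvROmega ω A x y z + curvROmega ω A y z x + curvROmega ω A z x y = 0 := by
  have hsA := bilin_apply_symm_of_skewAdjoint hskew hAskew
  simp only [curvROmega, hAskew, hskew y x, hskew z y, hskew x z, hsA]
  module

theorem curvRJ_bianchi (hskew : ∀ x y, ω x y = - ω y x)
    (hJsq : J * J = -1) (hherm : ∀ x y, ω (J x) (J y) = ω x y)
    (hAskew : ∀ x y, ω (A x) y = - ω x (A y)) (hAJ : A * J = J * A) (x y z : V) :
    curvRJ ω J A x y z + curvRJ ω J A y z x + curvRJ ω J A z x y = 0 := by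
  have hJA (w : V) : A (J w) = J (A w) := LinearMap.congr_fun hAJ w
  have hg := bilin_apply_symm_of_sq_eq_neg_one hskew hJsq hherm
  have hgA := bilin_apply_comp_antisymm hskew hJsq hherm hAskew hAJ
  simp only [curvRJ, hAskew, hJA, hg, hgA y x, hgA z y, hgA x z]
  module

end

theorem curvR_eq_smul_sub_sum {V : Type*} [AddCommGroup V] [Module ℝ V]
    (ω : LinearMap.BilinForm ℝ V) (J : Fin 3 → Module.End ℝ V)
    (A : Module.End ℝ V) (κ : ℝ) (x y z : V) :
    curvR ω J A κ x y z = (κ / 2) • (curvROmega ω A x y z - ∑ a, curvRJ ω (J a) A x y z) := by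
  simp only [curvR, curvROmega, curvRJ, Fin.sum_univ_three]
  module

theorem stmt6_general (V : Type*) [AddCommGroup V] [Module ℝ V]
    (J : Fin 3 → Module.End ℝ V)
    (hJsq : ∀ a, J a * J a = -1)
    (ω : LinearMap.BilinForm ℝ V)
    (hskew : ∀ x y, ω x y = - ω y x)
    (hherm : ∀ (a : Fin 3) x y, ω (J a x) (J a y) = ω x y)
    (κ : ℝ)
    (A : Module.End ℝ V)
    (hAskew : ∀ x y, ω (A x) y = - ω x (A y))
    (hAcomm : ∀ a, A * J a = J a * A) :
    ∀ x y z : V,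
      curvR ω J A κ x y z + curvR ω J A κ y z x + curvR ω J A κ z x y = 0 := by
  intro x y z
  have hJ (a : Fin 3) :=
    curvRJ_bianchi hskew (hJsq a) (hherm a) hAskew (hAcomm a) x y z
  calc curvR ω J A κ x y z + curvR ω J A κ y z x + curvR ω J A κ z x y
      = (κ / 2) • ((curvROmega ω A x y z + curvROmega ω A y z x + curvROmega ω A z x y)
          - ∑ a, (curvRJ ω (J a) A x y z + curvRJ ω (J a) A y z x
            + curvRJ ω (J a) A z x y)) := by
        simp only [curvR_eq_smul_sub_sum, Finset.sum_add_distrib]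
        module
    _ = 0 := by simp [curvROmega_bianchi hskew hAskew, hJ]

theorem stmt6 (V : Type*) [AddCommGroup V] [Module ℝ V] [FiniteDimensional ℝ V]
    (n : ℕ) (hdim : Module.finrank ℝ V = 4 * n)
    (J : Fin 3 → Module.End ℝ V)
    (hJsq : ∀ a, J a * J a = -1)
    (hJJJ : J 0 * J 1 * J 2 = -1)
    (ω : LinearMap.BilinForm ℝ V)
    (hskew : ∀ x y, ω x y = - ω y x)
    (hnd : ∀ x, (∀ y, ω x y = 0) → x = 0)
    (hherm : ∀ (a : Fin 3) x y, ω (J a x) (J a y) = ω x y)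
    (κ : ℝ) (hκ : κ ≠ 0)
    (A : Module.End ℝ V)
    (hAskew : ∀ x y, ω (A x) y = - ω x (A y))
    (hAcomm : ∀ a, A * J a = J a * A) :
    ∀ x y z : V,
      curvR ω J A κ x y z + curvR ω J A κ y z x + curvR ω J A κ z x y = 0 :=
  stmt6_general V J hJsq ω hskew hherm κ A hAskew hAcomm
end

section
/- With R_A as in the curvature formula (equation for R_A^{Q,ω}) and A = J1 (an element of sp(1)), R_A also satisfies the first Bianchi identity: the cyclic sum of R_{J1}(x,y)z over (x,y,z) vanishes. -/
namespace LinearMap.BilinForm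

variable {V : Type*} [AddCommGroup V] [Module ℝ V] {ω : LinearMap.BilinForm ℝ V}
  {T : Module.End ℝ V}

theorem apply_comp_right_symm (hskew : ∀ x y, ω x y = -ω y x) (hsq : T * T = -1)
    (hT : ∀ x y, ω (T x) (T y) = ω x y) (u v : V) : ω u (T v) = ω v (T u) := by
  have hTT : T (T v) = -v := by simpa using LinearMap.congr_fun hsq v
  rw [← hT u (T v), hTT, map_neg, hskew (T u) v, neg_neg]

theorem apply_comp_left_symm (hskew : ∀ x y, ω x y = -ω y x) (hsq : T * T = -1)
    (hT : ∀ x y, ω (T x) (T y) = ω x y) (u v : V) : ω (T u) v = ω (T v) u := by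
  rw [hskew (T u) v, apply_comp_right_symm hskew hsq hT v u, hskew u (T v), neg_neg]

end LinearMap.BilinForm

theorem curvR_cyclic_sum_eq_zero {V : Type*} [AddCommGroup V] [Module ℝ V]
    {ω : LinearMap.BilinForm ℝ V} {J : Fin 3 → Module.End ℝ V} {A : Module.End ℝ V} (κ : ℝ)
    (hskew : ∀ x y, ω x y = -ω y x) (hJ : ∀ a u v, ω u (J a v) = ω v (J a u))
    (hA : ∀ u v, ω (A u) v = ω (A v) u) (x y z : V) :
    curvR ω J A κ x y z + curvR ω J A κ y z x + curvR ω J A κ z x y = 0 := by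
  simp only [curvR, Fin.sum_univ_three]
  simp only [hJ _ _ (A _), hJ _ z x, hJ _ z y, hJ _ y x, hskew y x, hskew z x, hskew z y,
    hA z y, hA z x, hA y x]
  module

theorem stmt7_general (V : Type*) [AddCommGroup V] [Module ℝ V]
    (J : Fin 3 → Module.End ℝ V)
    (hJsq : ∀ a, J a * J a = -1)
    (ω : LinearMap.BilinForm ℝ V)
    (hskew : ∀ x y, ω x y = - ω y x)
    (hherm : ∀ (a : Fin 3) x y, ω (J a x) (J a y) = ω x y)
    (κ : ℝ) :
    ∀ x y z : V,
      curvR ω J (J 0) κ x y z + curvR ω J (J 0) κ y z x + curvR ω J (J 0) κ z x y = 0 :=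
  curvR_cyclic_sum_eq_zero κ hskew
    (fun a => LinearMap.BilinForm.apply_comp_right_symm hskew (hJsq a) (hherm a))
    (LinearMap.BilinForm.apply_comp_left_symm hskew (hJsq 0) (hherm 0))

theorem stmt7 (V : Type*) [AddCommGroup V] [Module ℝ V] [FiniteDimensional ℝ V]
    (n : ℕ) (hdim : Module.finrank ℝ V = 4 * n)
    (J : Fin 3 → Module.End ℝ V)
    (hJsq : ∀ a, J a * J a = -1)
    (hJJJ : J 0 * J 1 * J 2 = -1)
    (ω : LinearMap.BilinForm ℝ V)
    (hskew : ∀ x y, ω x y = - ω y x)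
    (hnd : ∀ x, (∀ y, ω x y = 0) → x = 0)
    (hherm : ∀ (a : Fin 3) x y, ω (J a x) (J a y) = ω x y)
    (κ : ℝ) (hκ : κ ≠ 0) :
    ∀ x y z : V,
      curvR ω J (J 0) κ x y z + curvR ω J (J 0) κ y z x + curvR ω J (J 0) κ z x y = 0 :=
  stmt7_general V J hJsq ω hskew hherm κ
end

section
/- Suppose Ric_A(x,y) = (2n+4)κ ω(A₁x,y) + 4nκ ω(A₂x,y) where A = A₁ + A₂ with A₁ ω-skew-symmetric commuting with all Ja and A₂ ∈ span{J1,J2,J3}, κ ≠ 0, and ω nondegenerate and Ja-Hermitian. Then Ric_A is Q-Hermitian (invariant under all Ja: Ric_A(JaX, JaY) = Ric_A(X,Y) for a=1,2,3) if and only if A₂ = 0. -/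
/-! Since `Jₐ` is `ω`-Hermitian with `Jₐ² = -1`, the form `ω(B·,·)` is `Jₐ`-invariant exactly when
`Jₐ B Jₐ = -B`. The `A₁`-part of `Ric_A` is always invariant, so invariance of `Ric_A` forces
`Jₐ A₂ Jₐ = -A₂` for every `a`. On the other hand the quaternion relations give
`∑ₐ Jₐ X Jₐ = X` for every `X ∈ span{J₁, J₂, J₃}`, hence `A₂ = -3 A₂`, i.e. `A₂ = 0`. -/

section Quaternion

variable {R : Type*} [Ring R] {q : Fin 3 → R}

theorem sum_mul_mul_eq_of_quaternion (hsq : ∀ a, q a * q a = -1)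
    (hprod : q 0 * q 1 * q 2 = -1) (b : Fin 3) : ∑ a, q a * q b * q a = q b := by
  have h01 : q 0 * q 1 = q 2 := by
    have h : q 0 * q 1 * (q 2 * q 2) = -q 2 := by rw [← mul_assoc, hprod, neg_one_mul]
    simpa [hsq] using h
  have h12 : q 1 * q 2 = q 0 := by
    have h : q 0 * (q 0 * q 1 * q 2) = -q 0 := by rw [hprod, mul_neg_one]
    simpa [← mul_assoc, hsq] using h
  have h10 : q 1 * q 0 = -q 2 := by rw [← h12, ← mul_assoc, hsq, neg_one_mul]
  have h21 : q 2 * q 1 = -q 0 := by rw [← h01, mul_assoc, hsq, mul_neg_one]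
  have h02 : q 0 * q 2 = -q 1 := by rw [← h01, ← mul_assoc, hsq, neg_one_mul]
  have h20 : q 2 * q 0 = q 1 := by rw [← h12, ← mul_assoc, h21, neg_mul, h02, neg_neg]
  fin_cases b <;> simp [Fin.sum_univ_three, hsq, h01, h12, h10, h21, h02, h20]

theorem sum_mul_sum_smul_mul_eq_of_quaternion {S : Type*} [CommSemiring S] [Algebra S R]
    (hsq : ∀ a, q a * q a = -1) (hprod : q 0 * q 1 * q 2 = -1) (c : Fin 3 → S) :
    ∑ a, q a * (∑ b, c b • q b) * q a = ∑ b, c b • q b := by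
  simp_rw [Finset.mul_sum, Finset.sum_mul, mul_smul_comm, smul_mul_assoc]
  rw [Finset.sum_comm]
  simp_rw [← Finset.smul_sum, sum_mul_mul_eq_of_quaternion hsq hprod]

end Quaternion

namespace LinearMap.BilinForm

variable {R V : Type*} [CommRing R] [AddCommGroup V] [Module R V] {ω : LinearMap.BilinForm R V}
  {J : Module.End R V}

theorem apply_apply_eq_neg_mul_mul_apply (hJ : J * J = -1) (hω : ∀ x y, ω (J x) (J y) = ω x y)
    (B : Module.End R V) (x y : V) : ω (B (J x)) (J y) = -ω ((J * B * J) x) y := by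
  have hBJ : B (J x) = -J ((J * B * J) x) := by
    simp [← Module.End.mul_apply, ← mul_assoc, hJ]
  rw [hBJ, map_neg, LinearMap.neg_apply, hω]

theorem apply_apply_of_commute (hJ : J * J = -1) (hω : ∀ x y, ω (J x) (J y) = ω x y)
    {B : Module.End R V} (hB : Commute B J) (x y : V) : ω (B (J x)) (J y) = ω (B x) y := by
  rw [apply_apply_eq_neg_mul_mul_apply hJ hω, ← hB.eq, mul_assoc, hJ]
  simp

theorem mul_mul_eq_neg_of_invariant (hJ : J * J = -1) (hω : ∀ x y, ω (J x) (J y) = ω x y)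
    (hsep : ω.SeparatingLeft) {B : Module.End R V}
    (hB : ∀ x y, ω (B (J x)) (J y) = ω (B x) y) : J * B * J = -B := by
  ext x
  refine sub_eq_zero.mp (hsep _ fun y ↦ ?_)
  have h := apply_apply_eq_neg_mul_mul_apply hJ hω B x y
  rw [hB] at h
  simp [h]

end LinearMap.BilinForm

theorem stmt12_general (V : Type*) [AddCommGroup V] [Module ℝ V]
    (n : ℕ) (hn : 2 ≤ n)
    (J : Fin 3 → Module.End ℝ V)
    (hJsq : ∀ a, J a * J a = -1)
    (hJJJ : J 0 * J 1 * J 2 = -1)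
    (ω : LinearMap.BilinForm ℝ V)
    (hnd : ∀ x, (∀ y, ω x y = 0) → x = 0)
    (hherm : ∀ (a : Fin 3) x y, ω (J a x) (J a y) = ω x y)
    (κ : ℝ) (hκ : κ ≠ 0)
    (A₁ : Module.End ℝ V)
    (hA₁comm : ∀ a, A₁ * J a = J a * A₁)
    (c : Fin 3 → ℝ) (A₂ : Module.End ℝ V) (hA₂ : A₂ = ∑ a : Fin 3, c a • J a) :
    (∀ (a : Fin 3) (x y : V),
        (2 * (n : ℝ) + 4) * κ * ω (A₁ (J a x)) (J a y)
          + 4 * (n : ℝ) * κ * ω (A₂ (J a x)) (J a y)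
        = (2 * (n : ℝ) + 4) * κ * ω (A₁ x) y + 4 * (n : ℝ) * κ * ω (A₂ x) y)
      ↔ A₂ = 0 := by
  have hA₁ (a : Fin 3) (x y : V) : ω (A₁ (J a x)) (J a y) = ω (A₁ x) y :=
    LinearMap.BilinForm.apply_apply_of_commute (hJsq a) (hherm a) (hA₁comm a) x y
  refine ⟨fun hRic ↦ ?_, fun h₀ a x y ↦ by simp [h₀, hA₁]⟩
  have hscale : 4 * (n : ℝ) * κ ≠ 0 := by
    have : (n : ℝ) ≠ 0 := Nat.cast_ne_zero.mpr (by omega)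
    positivity
  have hconj (a : Fin 3) : J a * A₂ * J a = -A₂ :=
    LinearMap.BilinForm.mul_mul_eq_neg_of_invariant (hJsq a) (hherm a) hnd fun x y ↦
      mul_left_cancel₀ hscale (add_left_cancel (by simpa only [hA₁] using hRic a x y))
  have h : A₂ = -((3 : ℝ) • A₂) :=
    calc A₂ = ∑ a, J a * A₂ * J a := by
          rw [hA₂, sum_mul_sum_smul_mul_eq_of_quaternion hJsq hJJJ c]
      _ = -((3 : ℝ) • A₂) := by simp only [hconj, Fin.sum_univ_three]; module
  linear_combination (norm := module) (4 : ℝ)⁻¹ • h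

theorem stmt12 (V : Type*) [AddCommGroup V] [Module ℝ V] [FiniteDimensional ℝ V]
    (n : ℕ) (hn : 2 ≤ n) (hdim : Module.finrank ℝ V = 4 * n)
    (J : Fin 3 → Module.End ℝ V)
    (hJsq : ∀ a, J a * J a = -1)
    (hJJJ : J 0 * J 1 * J 2 = -1)
    (ω : LinearMap.BilinForm ℝ V)
    (hskew : ∀ x y, ω x y = - ω y x)
    (hnd : ∀ x, (∀ y, ω x y = 0) → x = 0)
    (hherm : ∀ (a : Fin 3) x y, ω (J a x) (J a y) = ω x y)
    (κ : ℝ) (hκ : κ ≠ 0)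
    (A₁ : Module.End ℝ V)
    (hA₁skew : ∀ x y, ω (A₁ x) y = - ω x (A₁ y))
    (hA₁comm : ∀ a, A₁ * J a = J a * A₁)
    (c : Fin 3 → ℝ) (A₂ : Module.End ℝ V) (hA₂ : A₂ = ∑ a : Fin 3, c a • J a) :
    (∀ (a : Fin 3) (x y : V),
        (2 * (n : ℝ) + 4) * κ * ω (A₁ (J a x)) (J a y)
          + 4 * (n : ℝ) * κ * ω (A₂ (J a x)) (J a y)
        = (2 * (n : ℝ) + 4) * κ * ω (A₁ x) y + 4 * (n : ℝ) * κ * ω (A₂ x) y)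
      ↔ A₂ = 0 :=
  stmt12_general V n hn J hJsq hJJJ ω hnd hherm κ hκ A₁ hA₁comm c A₂ hA₂
end
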